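/- Let G_i (i ∈ I) be groups, F a free group, and h : lim← *_{i∈I} G_i → F a non-trivial homomorphism. If A_n ⊆ A_{n+1} ⊆ I for all n < ω, A = ⋃_{n<ω} A_n, and A_n ∉ supp(h) for each n, then A ∉ supp(h). -/

import Mathlib

open Monoid

noncomputable section
open scoped Classical

variable (I : Type*) (G : I → Type*) [∀ i, Group (G i)]

/-- The canonical bonding homomorphism `p_{XY} : *_{i∈Y} G_i → *_{i∈X} G_i` for
finite subsets `X ⊆ Y` of `I`: identity on each `G_i` with `i ∈ X`, trivial otherwise. -/
def bond {I : Type*} {G : I → Type*} [∀ i, Group (G i)] {X Y : Finset I} (_ : X ⊆ Y) :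
    CoprodI (fun i : Y => G i) →* CoprodI (fun i : X => G i) :=
  CoprodI.lift fun i =>
    if h : (i : I) ∈ X then (CoprodI.of (M := fun j : X => G j) (i := ⟨(i : I), h⟩)) else 1

/-- The canonical inclusion `*_{i∈X} G_i → *_{i∈Y} G_i` for finite `X ⊆ Y`. -/
def incl {I : Type*} {G : I → Type*} [∀ i, Group (G i)] {X Y : Finset I} (h : X ⊆ Y) :
    CoprodI (fun i : X => G i) →* CoprodI (fun i : Y => G i) :=
  CoprodI.lift fun i => (CoprodI.of (M := fun j : Y => G j) (i := ⟨(i : I), h i.2⟩))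

lemma bond_incl {I : Type*} {G : I → Type*} [∀ i, Group (G i)] (S : Set I)
    {X Y : Finset I} (h : X ⊆ Y)
    (z : CoprodI (fun i : (Y.filter (· ∈ S)) => G i)) :
    bond h (incl (Finset.filter_subset _ Y) z)
      = incl (Finset.filter_subset (· ∈ S) X)
          (bond (Finset.filter_subset_filter _ h) z) := by
  have : (bond h).comp (incl (Finset.filter_subset (· ∈ S) Y))
      = (incl (Finset.filter_subset (· ∈ S) X)).comp
          (bond (G := G) (Finset.filter_subset_filter (· ∈ S) h)) := by
    apply CoprodI.ext_hom
    intro i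
    ext g
    obtain ⟨i, hi⟩ := i
    have hiS : i ∈ S := (Finset.mem_filter.1 hi).2
    have hiY : i ∈ Y := (Finset.mem_filter.1 hi).1
    simp only [MonoidHom.comp_apply, incl, bond, CoprodI.lift_of]
    by_cases hx : i ∈ X
    · rw [dif_pos hx, dif_pos (Finset.mem_filter.2 ⟨hx, hiS⟩), CoprodI.lift_of]
    · rw [dif_neg hx, dif_neg (fun hc => hx (Finset.mem_filter.1 hc).1),
        MonoidHom.one_apply, MonoidHom.one_apply, map_one]
  exact DFunLike.congr_fun this z

/-- The unrestricted free product `lim← *_{i∈I} G_i`: the inverse limit of the free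
products of finite subfamilies, realized as the subgroup of the product consisting of
families compatible under the bonding maps. -/
def UFP : Subgroup (Π X : Finset I, CoprodI (fun i : X => G i)) where
  carrier := {x | ∀ ⦃X Y : Finset I⦄ (h : X ⊆ Y), bond h (x Y) = x X}
  one_mem' := by intro X Y h; simp
  mul_mem' := by intro a b ha hb X Y h; simp only [Pi.mul_apply, map_mul, ha h, hb h]
  inv_mem' := by intro a ha X Y h; simp only [Pi.inv_apply, map_inv, ha h]

/-- The canonical projection `p_S : lim← *_{i∈I} G_i → lim← *_{i∈I} G_i` for `S ⊆ I`,
defined by `p_S(x)(X) = x(X ∩ S)` (included into `*_{i∈X} G_i`). -/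
def pProj (S : Set I) : UFP I G →* UFP I G where
  toFun x := ⟨fun X => incl (Finset.filter_subset (· ∈ S) X) (x.1 (X.filter (· ∈ S))),
    by
      intro X Y h
      rw [bond_incl S h, x.2 (Finset.filter_subset_filter _ h)]⟩
  map_one' := by ext X; simp
  map_mul' a b := by ext X; simp

/-- The canonical projection of the inverse limit to its `X₀`-th coordinate. -/
def finProj (X₀ : Finset I) : UFP I G →* CoprodI (fun i : X₀ => G i) :=
  (Pi.evalMonoidHom _ X₀).comp (UFP I G).subtype

/-- `supp(h) = { X ⊆ I : p_X(g) = e → h(g) = e for all g }`. -/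
def supp {F : Type*} [Group F] (h : UFP I G →* F) : Set (Set I) :=
  {X | ∀ g : UFP I G, pProj I G X g = 1 → h g = 1}

/-- An ultrafilter is countably complete if it is closed under countable intersections. -/
def CountablyComplete {I : Type*} (u : Ultrafilter I) : Prop :=
  ∀ s : ℕ → Set I, (∀ n, s n ∈ u) → (⋂ n, s n) ∈ u


namespace FGAux
open FreeGroup List

variable {α : Type*}

/-- Non-cancellation relation between adjacent letters. -/
def NC (x y : α × Bool) : Prop := ¬(x.1 = y.1 ∧ x.2 = !y.2)

variable [DecidableEq α]

lemma chain'_reduce (L : List (α × Bool)) : List.Chain' NC (reduce L) := by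
  induction L with
  | nil => exact List.isChain_nil
  | cons x L ih =>
    rw [reduce.cons]
    cases hr : reduce L with
    | nil => exact List.isChain_singleton _
    | cons hd tl =>
      rw [hr] at ih
      by_cases h : x.1 = hd.1 ∧ x.2 = !hd.2
      · simpa [h, List.Chain'] using ih.tail
      · simpa [h, List.Chain'] using (List.isChain_cons_cons.2 ⟨h, ih⟩ : List.IsChain NC (x :: hd :: tl))

lemma reduce_eq_self_of_chain' {L : List (α × Bool)} (h : List.Chain' NC L) :
    reduce L = L := by
  induction L with
  | nil => simp
  | cons x t ih =>
    have ht : reduce t = t := ih h.tail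
    rw [reduce.cons, ht]
    cases t with
    | nil => rfl
    | cons hd tl =>
      have hx : NC x hd := (List.isChain_cons_cons.1 h).1
      simp only [NC] at hx
      simp [hx]

lemma chain'_toWord (x : FreeGroup α) : List.Chain' NC x.toWord := by
  rw [← reduce_toWord]; exact chain'_reduce _

lemma toWord_mul (x y : FreeGroup α) :
    (x * y).toWord = reduce (x.toWord ++ y.toWord) := by
  conv_lhs => rw [← mk_toWord (x := x), ← mk_toWord (x := y)]
  rw [mul_mk, toWord_mk]

omit [DecidableEq α] in
lemma invRev_cons (y : α × Bool) (p : List (α × Bool)) :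
    invRev (y :: p) = invRev p ++ [(y.1, !y.2)] := by
  simp [invRev]

omit [DecidableEq α] in
lemma chain'_u {u : List (α × Bool)} (hcu : List.Chain' NC (u ++ u)) :
    List.Chain' NC u := hcu.prefix ⟨u, rfl⟩

omit [DecidableEq α] in
lemma junction_u {u : List (α × Bool)} (hcu : List.Chain' NC (u ++ u)) :
    ∀ x ∈ u.getLast?, ∀ y ∈ u.head?, NC x y :=
  (List.isChain_append.1 hcu).2.2

omit [DecidableEq α] in
lemma chain'_u_flatten {u : List (α × Bool)} (hu : u ≠ [])
    (hcu : List.Chain' NC (u ++ u)) (m : ℕ) :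
    List.Chain' NC (u ++ (List.replicate m u).flatten) := by
  induction m with
  | zero => simpa using chain'_u hcu
  | succ k ih =>
    rw [List.replicate_succ, List.flatten_cons]
    refine List.isChain_append.2 ⟨chain'_u hcu, ih, ?_⟩
    intro x hx y hy
    rw [List.head?_append_of_ne_nil _ hu] at hy
    exact junction_u hcu x hx y hy

lemma toWord_mk_pow {u : List (α × Bool)} (hu : u ≠ [])
    (hcu : List.Chain' NC (u ++ u)) (m : ℕ) :
    ((mk u) ^ m).toWord = (List.replicate m u).flatten := by
  induction m with
  | zero => simp [toWord_one]
  | succ k ih =>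
    have hru : (mk u).toWord = u := by
      rw [toWord_mk]; exact reduce_eq_self_of_chain' (chain'_u hcu)
    rw [pow_succ', toWord_mul, ih, hru,
      reduce_eq_self_of_chain' (chain'_u_flatten hu hcu k),
      ← List.flatten_cons, ← List.replicate_succ]

omit [DecidableEq α] in
lemma head?_flatten_replicate {u : List (α × Bool)} (hu : u ≠ []) (k : ℕ) :
    ((List.replicate (k + 1) u).flatten).head? = u.head? := by
  rw [List.replicate_succ, List.flatten_cons, List.head?_append_of_ne_nil _ hu]

omit [DecidableEq α] in
lemma getLast?_flatten_replicate {u : List (α × Bool)} (hu : u ≠ []) (k : ℕ) :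
    ((List.replicate (k + 1) u).flatten).getLast? = u.getLast? := by
  rw [List.replicate_succ', List.flatten_append, List.flatten_cons, List.flatten_nil,
    List.append_nil, List.getLast?_append_of_ne_nil _ hu]

lemma exists_cyclic_decomp (w : FreeGroup α) (hw : w ≠ 1) :
    ∃ p u : List (α × Bool), u ≠ [] ∧ List.Chain' NC (u ++ u) ∧
      w.toWord = p ++ u ++ invRev p := by
  suffices H : ∀ n (w : FreeGroup α), w ≠ 1 → w.toWord.length = n →
      ∃ p u : List (α × Bool), u ≠ [] ∧ List.Chain' NC (u ++ u) ∧
        w.toWord = p ++ u ++ invRev p from H _ w hw rfl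
  intro n
  induction n using Nat.strong_induction_on with
  | _ n ih =>
    intro w hw hlen
    have hl : List.Chain' NC w.toWord := chain'_toWord w
    have hne : w.toWord ≠ [] := fun hc => hw (toWord_eq_nil_iff.1 hc)
    by_cases hc : List.Chain' NC (w.toWord ++ w.toWord)
    · exact ⟨[], w.toWord, hne, hc, by simp [invRev]⟩
    · have hJ : ¬ ∀ x ∈ w.toWord.getLast?, ∀ y ∈ w.toWord.head?, NC x y :=
        fun hJ => hc (List.isChain_append.2 ⟨hl, hl, hJ⟩)
      push_neg at hJ
      obtain ⟨x, hx, y, hy, hxy⟩ := hJ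
      have hxy' : x.1 = y.1 ∧ x.2 = !y.2 := by
        by_contra hcon; exact hxy hcon
      obtain ⟨t, hlt⟩ : ∃ t, w.toWord = y :: t := by
        cases hE : w.toWord with
        | nil => exact absurd hE hne
        | cons a t =>
          rw [hE] at hy; simp at hy
          exact ⟨t, by rw [hy]⟩
      have ht : t ≠ [] := by
        rintro rfl
        rw [hlt] at hx; simp at hx
        subst hx
        simp at hxy'
      obtain ⟨mid, b, hmb⟩ : ∃ L b, t = L ++ [b] := by
        simpa only [List.concat_eq_append] using (t.eq_nil_or_concat).resolve_left ht
      have hxb : b = x := by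
        rw [hlt, hmb, ← List.cons_append, List.getLast?_concat] at hx
        simpa using hx
      subst hxb
      -- mid is nonempty
      have hlmid : w.toWord = y :: mid ++ [b] := by rw [hlt, hmb, List.cons_append]
      have hmidne : mid ≠ [] := by
        rintro rfl
        simp only [List.cons_append, List.nil_append] at hlmid
        rw [hlmid] at hl
        have hyb : NC y b := by simpa [List.Chain'] using hl
        exact hyb ⟨hxy'.1.symm, by rw [hxy'.2, Bool.not_not]⟩
      -- mid is reduced and is the word of w' := mk mid
      have hchmid : List.Chain' NC mid := hl.infix ⟨[y], [b], by rw [hlmid]; simp⟩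
      have hmidword : (mk mid).toWord = mid := by
        rw [toWord_mk]; exact reduce_eq_self_of_chain' hchmid
      have hw' : (mk mid) ≠ 1 := by
        intro hcon
        rw [hcon, toWord_one] at hmidword
        exact hmidne hmidword.symm
      have hlen' : (mk mid).toWord.length < n := by
        rw [hmidword, ← hlen, hlmid]
        simp
      obtain ⟨p', u, hu, hcu, hdec⟩ := ih _ hlen' (mk mid) hw' rfl
      rw [hmidword] at hdec
      refine ⟨y :: p', u, hu, hcu, ?_⟩
      rw [hlmid, invRev_cons, hdec]
      have hb : b = (y.1, !y.2) := by
        have := hxy'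
        cases b; cases y
        simp_all
      rw [hb]
      simp
  

lemma chain'_big {p u : List (α × Bool)} (hu : u ≠ [])
    (hcu : List.Chain' NC (u ++ u))
    (Hw : List.Chain' NC (p ++ u ++ invRev p)) (k : ℕ) :
    List.Chain' NC (p ++ (List.replicate (k + 1) u).flatten ++ invRev p) := by
  rw [List.append_assoc] at Hw ⊢
  obtain ⟨hp, H2, J1⟩ := List.isChain_append.1 Hw
  obtain ⟨hcu', hinv, J2⟩ := List.isChain_append.1 H2
  set j := (List.replicate (k + 1) u).flatten with hjdef
  have hj : List.Chain' NC j := by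
    rw [hjdef, ← toWord_mk_pow hu hcu]; exact chain'_toWord _
  have hjne : j ≠ [] := by
    intro hnil
    have h1 := head?_flatten_replicate hu k
    rw [← hjdef, hnil] at h1
    cases u with
    | nil => exact hu rfl
    | cons a l => simp at h1
  refine List.isChain_append.2 ⟨hp, List.isChain_append.2 ⟨hj, hinv, ?_⟩, ?_⟩
  · intro a ha b hb
    rw [hjdef, getLast?_flatten_replicate hu] at ha
    exact J2 a ha b hb
  · intro a ha b hb
    rw [List.head?_append_of_ne_nil _ hjne, hjdef, head?_flatten_replicate hu] at hb
    apply J1 a ha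
    rw [List.head?_append_of_ne_nil _ hu]
    exact hb

lemma norm_pow_succ (w : FreeGroup α) (hw : w ≠ 1) (k : ℕ) :
    norm w + k ≤ norm (w ^ (k + 1)) := by
  obtain ⟨p, u, hu, hcu, hdec⟩ := exists_cyclic_decomp w hw
  have Hw : List.Chain' NC (p ++ u ++ invRev p) := hdec ▸ chain'_toWord w
  have conjpow : ∀ (b c : FreeGroup α) (m : ℕ), (b * c * b⁻¹) ^ m = b * c ^ m * b⁻¹ := by
    intro b c m
    induction m with
    | zero => simp
    | succ n ihn => rw [pow_succ, pow_succ, ihn]; simp [mul_assoc]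
  have hwp : w = mk p * mk u * (mk p)⁻¹ := by
    rw [inv_mk, mul_mk, mul_mk, ← hdec, mk_toWord]
  have hmku : (mk u) ^ (k + 1) = mk ((List.replicate (k + 1) u).flatten) := by
    rw [← toWord_mk_pow hu hcu, mk_toWord]
  have hpow : w ^ (k + 1) = mk (p ++ (List.replicate (k + 1) u).flatten ++ invRev p) := by
    rw [hwp, conjpow, hmku, inv_mk, mul_mk, mul_mk]
  have hword : (w ^ (k + 1)).toWord = p ++ (List.replicate (k + 1) u).flatten ++ invRev p := by
    rw [hpow, toWord_mk]
    exact reduce_eq_self_of_chain' (chain'_big hu hcu Hw k)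
  have hflatlen : ((List.replicate (k + 1) u).flatten).length = (k + 1) * u.length := by
    rw [List.length_flatten, List.map_replicate, List.sum_replicate, smul_eq_mul]
  have h1 : norm (w ^ (k + 1)) = p.length + (k + 1) * u.length + p.length := by
    rw [FreeGroup.norm, hword]
    simp [hflatlen]
    ring
  have h2 : norm w = p.length + u.length + p.length := by
    rw [FreeGroup.norm, hdec]; simp; ring
  have hul : 1 ≤ u.length := List.length_pos_iff.2 hu
  rw [h1, h2]
  have hmul : (k + 1) * u.length = k * u.length + u.length := Nat.succ_mul _ _
  have hk : k ≤ k * u.length := Nat.le_mul_of_pos_right k hul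
  linarith

end FGAux



section UFPAux

variable {I : Type*} {G : I → Type*} [∀ i, Group (G i)]

lemma bond_incl_self {X Y : Finset I} (h : X ⊆ Y) (z : CoprodI (fun i : X => G i)) :
    bond h (incl h z) = z := by
  have key : (bond (G := G) h).comp (incl h) = MonoidHom.id _ := by
    apply CoprodI.ext_hom
    intro i
    ext g
    simp only [MonoidHom.comp_apply, MonoidHom.id_apply, incl, bond, CoprodI.lift_of]
    rw [dif_pos i.2]
  exact DFunLike.congr_fun key z

lemma incl_incl {X Y Z : Finset I} (h1 : X ⊆ Y) (h2 : Y ⊆ Z)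
    (z : CoprodI (fun i : X => G i)) :
    incl h2 (incl h1 z) = incl (h1.trans h2) z := by
  have key : (incl (G := G) h2).comp (incl h1) = incl (h1.trans h2) := by
    apply CoprodI.ext_hom
    intro i
    ext g
    simp only [MonoidHom.comp_apply, incl, CoprodI.lift_of]
  exact DFunLike.congr_fun key z

lemma incl_eq_of_eq (x : UFP I G) {X' X'' X : Finset I} (E : X' = X'')
    (h' : X' ⊆ X) (h'' : X'' ⊆ X) : incl h' (x.1 X') = incl h'' (x.1 X'') := by
  subst E; rfl

lemma pProj_pProj {S T : Set I} (hST : S ⊆ T) (x : UFP I G) :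
    pProj I G S (pProj I G T x) = pProj I G S x := by
  have key : ∀ X : Finset I,
      (pProj I G S (pProj I G T x)).1 X = (pProj I G S x).1 X := by
    intro X
    rw [show (pProj I G S (pProj I G T x)).1 X
        = incl (Finset.filter_subset (· ∈ S) X)
            (incl (Finset.filter_subset (· ∈ T) (X.filter (· ∈ S)))
              (x.1 ((X.filter (· ∈ S)).filter (· ∈ T)))) from rfl,
      incl_incl]
    exact incl_eq_of_eq x
      (Finset.filter_true_of_mem fun i hi => hST (Finset.mem_filter.1 hi).2) _ _
  exact Subtype.ext (funext key)

/-- Finite-depth nested product `y n * (y (n+1) * ( ... )^(m (n+1)))^(m n)` at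
coordinate `X`, with given `fuel`. -/
def fuelProd (y : ℕ → UFP I G) (m : ℕ → ℕ) (X : Finset I) :
    ℕ → ℕ → CoprodI (fun i : X => G i)
  | 0, _ => 1
  | f + 1, n => (y n).1 X * (fuelProd y m X f (n + 1)) ^ (m n)

lemma fuelProd_eq_one (y : ℕ → UFP I G) (m : ℕ → ℕ) (X : Finset I) :
    ∀ f n, (∀ k, n ≤ k → (y k).1 X = 1) → fuelProd y m X f n = 1 := by
  intro f
  induction f with
  | zero => intro n _; rfl
  | succ f ih =>
    intro n hn
    rw [fuelProd, hn n le_rfl, ih (n + 1) (fun k hk => hn k (by omega)), one_mul, one_pow]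

lemma fuelProd_stable (y : ℕ → UFP I G) (m : ℕ → ℕ) (X : Finset I) :
    ∀ f j n, (∀ k, n + f ≤ k → (y k).1 X = 1) →
      fuelProd y m X (f + j) n = fuelProd y m X f n := by
  intro f
  induction f with
  | zero =>
    intro j n hn
    rw [Nat.zero_add, fuelProd_eq_one y m X j n (fun k hk => hn k (by omega))]
    rfl
  | succ f ih =>
    intro j n hn
    rw [show f + 1 + j = (f + j) + 1 by omega, fuelProd, fuelProd,
      ih j (n + 1) (fun k hk => hn k (by omega))]

lemma fuelProd_eq_of_le (y : ℕ → UFP I G) (m : ℕ → ℕ) (X : Finset I) {f F n : ℕ}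
    (hle : f ≤ F) (hbase : ∀ k, n + f ≤ k → (y k).1 X = 1) :
    fuelProd y m X F n = fuelProd y m X f n := by
  obtain ⟨j, rfl⟩ := Nat.exists_eq_add_of_le hle
  exact fuelProd_stable y m X f j n hbase

lemma bond_fuelProd {X Y : Finset I} (h : X ⊆ Y) (y : ℕ → UFP I G) (m : ℕ → ℕ) :
    ∀ f n, bond h (fuelProd y m Y f n) = fuelProd y m X f n := by
  intro f
  induction f with
  | zero => intro n; exact map_one _
  | succ f ih =>
    intro n
    rw [fuelProd, fuelProd, map_mul, map_pow, ih (n + 1), (y n).2 h]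

end UFPAux


/-- **Lemma 3** (first part): if `A_n ⊆ A_{n+1} ⊆ I`, `A = ⋃_{n<ω} A_n` and
`A_n ∉ supp(h)` for each `n`, then `A ∉ supp(h)`. -/
theorem supp_union_not_mem {I : Type*} (G : I → Type*) [∀ i, Group (G i)]
    {α : Type*} (h : UFP I G →* FreeGroup α) (hnt : h ≠ 1)
    (A : ℕ → Set I) (hA : ∀ n, A n ⊆ A (n + 1))
    (hAn : ∀ n, A n ∉ supp I G h) :
    (⋃ n, A n) ∉ supp I G h := by
  intro hsupp
  set S : Set I := ⋃ n, A n with hS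
  have hsupp' : ∀ g : UFP I G, pProj I G S g = 1 → h g = 1 := hsupp
  have hAmono : Monotone A := monotone_nat_of_le_succ hA
  -- h is unchanged by pProj S
  have hfix : ∀ g : UFP I G, h (pProj I G S g) = h g := by
    intro g
    have h1 : pProj I G S (g * (pProj I G S g)⁻¹) = 1 := by
      rw [map_mul, map_inv, pProj_pProj (subset_refl S), mul_inv_cancel]
    have h2 := hsupp' _ h1
    rw [map_mul, map_inv] at h2
    exact (mul_inv_eq_one.1 h2).symm
  -- witnesses for each A n
  have hex : ∀ n, ∃ g : UFP I G, pProj I G (A n) g = 1 ∧ h g ≠ 1 := by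
    intro n
    have hn := hAn n
    simp only [supp, Set.mem_setOf_eq] at hn
    push_neg at hn
    exact hn
  choose g hg1 hg2 using hex
  set y : ℕ → UFP I G := fun n => pProj I G S (g n) with hy
  have hyA : ∀ n, pProj I G S (y n) = y n := fun n => pProj_pProj (subset_refl _) _
  have hyn1 : ∀ n, pProj I G (A n) (y n) = 1 := by
    intro n
    rw [hy]
    dsimp only
    rw [pProj_pProj (Set.subset_iUnion A n), hg1]
  have hyh : ∀ n, h (y n) ≠ 1 := by
    intro n
    rw [hy]
    dsimp only
    rw [hfix]
    exact hg2 n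
  -- eventual triviality of coordinates
  have hE : ∀ X : Finset I, ∃ N, ∀ k, N ≤ k → (y k).1 X = 1 := by
    intro X
    have hfin : ∃ N, ∀ i ∈ X, i ∈ S → i ∈ A N := by
      refine ⟨X.sup (fun i => if hi : i ∈ S then (Set.mem_iUnion.1 hi).choose else 0),
        fun i hiX hiS => ?_⟩
      have hspec : i ∈ A (if hi : i ∈ S then (Set.mem_iUnion.1 hi).choose else 0) := by
        rw [dif_pos hiS]
        exact (Set.mem_iUnion.1 hiS).choose_spec
      exact hAmono (Finset.le_sup hiX) hspec
    obtain ⟨N, hN⟩ := hfin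
    refine ⟨N, fun k hk => ?_⟩
    have hsub : X.filter (· ∈ S) ⊆ X.filter (· ∈ A k) := by
      intro i hi
      rw [Finset.mem_filter] at hi ⊢
      exact ⟨hi.1, hAmono hk (hN i hi.1 hi.2)⟩
    have h1 : incl (Finset.filter_subset (· ∈ A k) X)
        ((y k).1 (X.filter (· ∈ A k))) = 1 :=
      congrFun (congrArg Subtype.val (hyn1 k)) X
    have h2 : (y k).1 (X.filter (· ∈ A k)) = 1 := by
      have h3 := congrArg (bond (G := G) (Finset.filter_subset (· ∈ A k) X)) h1
      rwa [bond_incl_self, map_one] at h3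
    have h3 : (y k).1 (X.filter (· ∈ S)) = 1 := by
      rw [← (y k).2 hsub, h2, map_one]
    calc (y k).1 X = (pProj I G S (y k)).1 X := by rw [hyA k]
      _ = incl (Finset.filter_subset (· ∈ S) X) ((y k).1 (X.filter (· ∈ S))) := rfl
      _ = 1 := by rw [h3, map_one]
  choose NN hNN using hE
  set a : ℕ → FreeGroup α := fun n => h (y n) with ha
  set m : ℕ → ℕ := fun n => (a n).norm + 2 with hm
  -- the nested infinite products
  have hzmem : ∀ n, (fun X => fuelProd y m X (NN X) n) ∈ UFP I G := by
    intro n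
    intro X Y hXY
    rw [bond_fuelProd]
    have hbX : ∀ k, n + NN X ≤ k → (y k).1 X = 1 := fun k hk => hNN X k (by omega)
    have hbY : ∀ k, n + NN Y ≤ k → (y k).1 X = 1 := by
      intro k hk
      have h1 : (y k).1 Y = 1 := hNN Y k (by omega)
      rw [← (y k).2 hXY, h1, map_one]
    calc fuelProd y m X (NN Y) n
        = fuelProd y m X (NN X + NN Y) n :=
          (fuelProd_eq_of_le y m X (by omega) hbY).symm
      _ = fuelProd y m X (NN X) n := fuelProd_eq_of_le y m X (by omega) hbX
  set z : ℕ → UFP I G := fun n => ⟨_, hzmem n⟩ with hz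
  have hzrec : ∀ n, z n = y n * (z (n + 1)) ^ (m n) := by
    intro n
    apply Subtype.ext
    funext X
    have hRHS : ((y n * (z (n + 1)) ^ (m n)) : UFP I G).1 X
        = (y n).1 X * (fuelProd y m X (NN X) (n + 1)) ^ (m n) := rfl
    have hLHS : (z n).1 X = fuelProd y m X (NN X) n := rfl
    rw [hLHS, hRHS,
      show (y n).1 X * (fuelProd y m X (NN X) (n + 1)) ^ (m n)
        = fuelProd y m X (NN X + 1) n from rfl]
    exact (fuelProd_eq_of_le y m X (Nat.le_succ _)
      (fun k hk => hNN X k (by omega))).symm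
  set c : ℕ → FreeGroup α := fun n => h (z n) with hc
  have hcrec : ∀ n, c n = a n * (c (n + 1)) ^ (m n) := by
    intro n
    rw [hc]
    dsimp only
    rw [hzrec n, map_mul, map_pow]
  have hane : ∀ n, a n ≠ 1 := fun n => hyh n
  have hstep : ∀ n, c (n + 1) ≠ 1 → (c (n + 1)).norm + 1 ≤ (c n).norm := by
    intro n hne
    have hmn : m n = ((a n).norm + 1) + 1 := by rw [hm]
    have hpow : (c (n + 1)).norm + ((a n).norm + 1) ≤ ((c (n + 1)) ^ (m n)).norm := by
      rw [hmn]
      exact FGAux.norm_pow_succ _ hne _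
    have hle : ((c (n + 1)) ^ (m n)).norm ≤ (a n).norm + (c n).norm := by
      have hcc : (c (n + 1)) ^ (m n) = (a n)⁻¹ * c n := by
        rw [hcrec n, ← mul_assoc, inv_mul_cancel, one_mul]
      rw [hcc]
      calc FreeGroup.norm ((a n)⁻¹ * c n)
          ≤ FreeGroup.norm (a n)⁻¹ + FreeGroup.norm (c n) := FreeGroup.norm_mul_le _ _
        _ = FreeGroup.norm (a n) + FreeGroup.norm (c n) := by rw [FreeGroup.norm_inv_eq]
    omega
  have hne1 : ∀ n, c n ≠ 1 := by
    intro n hc1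
    have h1 : (c (n + 1)) ^ (m n) = (a n)⁻¹ := by
      have h0 : a n * (c (n + 1)) ^ (m n) = 1 := by rw [← hcrec n, hc1]
      exact (inv_eq_of_mul_eq_one_right h0).symm
    have h2 : c (n + 1) ≠ 1 := by
      intro hcc
      rw [hcc, one_pow] at h1
      exact hane n (by rw [← inv_inv (a n), ← h1, inv_one])
    have h3 := hstep n h2
    rw [hc1, FreeGroup.norm_one] at h3
    omega
  have hdesc : ∀ n, (c n).norm + n ≤ (c 0).norm := by
    intro n
    induction n with
    | zero => omega
    | succ k ih =>
      have := hstep k (hne1 (k + 1))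
      omega
  have hfin := hdesc ((c 0).norm + 1)
  have : 1 ≤ (c ((c 0).norm + 1)).norm := by
    have := hne1 ((c 0).norm + 1)
    have h0 : (c ((c 0).norm + 1)).norm ≠ 0 := fun hcon =>
      this (FreeGroup.norm_eq_zero.1 hcon)
    omega
  omega

end
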